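/- Rewriting Until to Weak Until is sound when the Until occurs infinitely often: for all pLTL formulae φ, ψ, words w, and times t, if (w, 0) ⊨ G F(φ U ψ) and (w, t) ⊨ φ W ψ, then (w, t) ⊨ φ U ψ. -/

import Mathlib

inductive PLTL (AP : Type) : Type
  | tt : PLTL AP
  | ff : PLTL AP
  | atom (p : AP) : PLTL AP
  | not (φ : PLTL AP) : PLTL AP
  | and (φ ψ : PLTL AP) : PLTL AP
  | or (φ ψ : PLTL AP) : PLTL AP
  | next (φ : PLTL AP) : PLTL AP
  | untl (φ ψ : PLTL AP) : PLTL AP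
  | yest (φ : PLTL AP) : PLTL AP
  | since (φ ψ : PLTL AP) : PLTL AP

def Word (AP : Type) := ℕ → Set AP

def Sat {AP : Type} (w : Word AP) : PLTL AP → ℕ → Prop
  | .tt, _ => True
  | .ff, _ => False
  | .atom p, t => p ∈ w t
  | .not φ, t => ¬ Sat w φ t
  | .and φ ψ, t => Sat w φ t ∧ Sat w ψ t
  | .or φ ψ, t => Sat w φ t ∨ Sat w ψ t
  | .next φ, t => Sat w φ (t + 1)
  | .untl φ ψ, t => ∃ r, t ≤ r ∧ Sat w ψ r ∧ ∀ s, t ≤ s → s < r → Sat w φ s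
  | .yest φ, t => 0 < t ∧ Sat w φ (t - 1)
  | .since φ ψ, t => ∃ r, r ≤ t ∧ Sat w ψ r ∧ ∀ s, r < s → s ≤ t → Sat w φ s

/-- Weak yesterday: `W̃Y φ := Y φ ∨ ¬ Y ⊤`. -/
def PLTL.wyest {AP : Type} (φ : PLTL AP) : PLTL AP :=
  .or (.yest φ) (.not (.yest .tt))

/-- Historically: `H φ := ¬(⊤ S ¬φ)`. -/
def PLTL.hist {AP : Type} (φ : PLTL AP) : PLTL AP :=
  .not (.since .tt (.not φ))

/-- Weak since: `φ S̃ ψ := (φ S ψ) ∨ H φ`. -/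
def PLTL.wsince {AP : Type} (φ ψ : PLTL AP) : PLTL AP :=
  .or (.since φ ψ) (.hist φ)

/-- Eventually: `F φ := ⊤ U φ`. -/
def PLTL.ev {AP : Type} (φ : PLTL AP) : PLTL AP := .untl .tt φ

/-- Always: `G φ := ¬ F ¬ φ`. -/
def PLTL.alw {AP : Type} (φ : PLTL AP) : PLTL AP := .not (.ev (.not φ))

/-- Weak until: `φ W ψ := (φ U ψ) ∨ G φ`. -/
def PLTL.wuntl {AP : Type} (φ ψ : PLTL AP) : PLTL AP :=
  .or (.untl φ ψ) (.alw φ)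

/-- The suffix `w₁` of a word: `w₁ t = w (t + 1)`. -/
def Word.suffix1 {AP : Type} (w : Word AP) : Word AP := fun t => w (t + 1)

section

variable {AP : Type} {w : Word AP} {φ ψ : PLTL AP} {t : ℕ}

theorem sat_ev_iff : Sat w φ.ev t ↔ ∃ r, t ≤ r ∧ Sat w φ r :=
  ⟨fun ⟨r, htr, hr, _⟩ => ⟨r, htr, hr⟩, fun ⟨r, htr, hr⟩ => ⟨r, htr, hr, fun _ _ _ => trivial⟩⟩

theorem sat_alw_iff : Sat w φ.alw t ↔ ∀ s, t ≤ s → Sat w φ s := by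
  simp only [PLTL.alw, Sat, sat_ev_iff, not_exists, not_and, not_not]

theorem sat_ev_of_ev_untl (h : Sat w (PLTL.untl φ ψ).ev t) : Sat w ψ.ev t := by
  obtain ⟨r, htr, r', hrr', hψ, -⟩ := sat_ev_iff.1 h
  exact sat_ev_iff.2 ⟨r', htr.trans hrr', hψ⟩

theorem sat_untl_of_alw_of_ev (hφ : Sat w φ.alw t) (hψ : Sat w ψ.ev t) :
    Sat w (.untl φ ψ) t := by
  obtain ⟨r, htr, hr⟩ := sat_ev_iff.1 hψ
  exact ⟨r, htr, hr, fun s hts _ => sat_alw_iff.1 hφ s hts⟩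

end

theorem weak_until_to_until_of_GF {AP : Type} (φ ψ : PLTL AP) (w : Word AP) (t : ℕ)
    (hGF : Sat w (PLTL.alw (PLTL.ev (.untl φ ψ))) 0)
    (h : Sat w (PLTL.wuntl φ ψ) t) :
    Sat w (.untl φ ψ) t := by
  rcases h with hU | hG
  · exact hU
  · have hF : Sat w (PLTL.untl φ ψ).ev t := sat_alw_iff.1 hGF t t.zero_le
    exact sat_untl_of_alw_of_ev hG (sat_ev_of_ev_untl hF)
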